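/- arXiv:1502.03154 — 5 statements merged into one kernel-verified Lean document; each statement's English description precedes it below -/
import Mathlib

section
/- Let M be a compact connected Hausdorff space, and let B ⊆ M be a nonempty closed connected subset admitting a collar: a topological embedding c : B × [0,1] → M with c(b,0) = b for all b ∈ B, with Set.range c a neighborhood of B in M, and with c(b,t) ∉ B whenever t > 0. Set I = M \ B with the subspace topology. Then I is one-ended: for every compact set K ⊆ I, there is exactly one connected component of I \ K whose closure in I is not compact. -/
/-!
Thicken the boundary by a thin open collar band `c (B × (0, ε))`, with `ε` so small that the
band misses `K`. The band is connected because `B` is. In the compact space `M`, a subset of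
`I` has compact closure in `I` exactly when its closure in `M` avoids `B`. The band accumulates
on all of `B`, so its component of `I \ K` has noncompact closure; conversely, a set whose
closure reaches `B` enters the neighbourhood `B ∪ band` of `B`, hence meets the band, so every
component with noncompact closure is the band's component.
-/

open Set Topology unitInterval

section Subtype

variable {X : Type*} [TopologicalSpace X]

theorem closure_image_val_subset_of_isCompact_closure [T2Space X] {U : Set X} {A : Set U}
    (h : IsCompact (closure A)) : closure (Subtype.val '' A) ⊆ U :=
  calc closure (Subtype.val '' A)
      ⊆ Subtype.val '' closure A :=
        (h.image continuous_subtype_val).isClosed.closure_subset_iff.2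
          (image_mono subset_closure)
    _ ⊆ U := Subtype.coe_image_subset _ _

theorem isCompact_closure_of_closure_image_val_subset [CompactSpace X] {U : Set X} {A : Set U}
    (h : closure (Subtype.val '' A) ⊆ U) : IsCompact (closure A) := by
  rw [IsInducing.subtypeVal.closure_eq_preimage_closure_image, Subtype.isCompact_iff,
    image_preimage_eq_of_subset (by rwa [Subtype.range_coe])]
  exact isClosed_closure.isCompact

theorem not_isCompact_closure_of_subset_closure_image_val [T2Space X] {B : Set X}
    (hB : B.Nonempty) {N : Set ↥Bᶜ} (h : B ⊆ closure (Subtype.val '' N)) :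
    ¬ IsCompact (closure N) := fun hN =>
  let ⟨_, hb⟩ := hB
  closure_image_val_subset_of_isCompact_closure hN (h hb) hb

theorem inter_preimage_nonempty_of_not_isCompact_closure [CompactSpace X] {B N : Set X}
    (hN : ∀ b ∈ B, B ∪ N ∈ 𝓝 b) {C : Set ↥Bᶜ} (hC : ¬ IsCompact (closure C)) :
    (C ∩ Subtype.val ⁻¹' N).Nonempty := by
  obtain ⟨b, hbC, hbB⟩ : ∃ b ∈ closure (Subtype.val '' C), b ∈ B := by
    by_contra! h
    exact hC (isCompact_closure_of_closure_image_val_subset h)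
  obtain ⟨_, hxN, x, hxC, rfl⟩ := mem_closure_iff_nhds.1 hbC _ (hN b hbB)
  exact ⟨x, hxC, hxN.resolve_left x.2⟩

end Subtype

theorem existsUnique_connectedComponentIn_not_isCompact_closure {Y : Type*}
    [TopologicalSpace Y] {K N : Set Y} (hN : IsPreconnected N) (hNK : N ⊆ Kᶜ)
    (hN_closure : ¬ IsCompact (closure N))
    (hmeet : ∀ C : Set Y, ¬ IsCompact (closure C) → (C ∩ N).Nonempty) :
    ∃! C : Set Y, (∃ x ∈ Kᶜ, C = connectedComponentIn Kᶜ x) ∧ ¬ IsCompact (closure C) := by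
  obtain ⟨x₀, hx₀⟩ : N.Nonempty :=
    nonempty_iff_ne_empty.2 fun h => hN_closure (by simp [h])
  have hN_sub : N ⊆ connectedComponentIn Kᶜ x₀ := hN.subset_connectedComponentIn hx₀ hNK
  refine ⟨connectedComponentIn Kᶜ x₀, ⟨⟨x₀, hNK hx₀, rfl⟩, fun h => hN_closure ?_⟩, ?_⟩
  · exact h.of_isClosed_subset isClosed_closure (closure_mono hN_sub)
  · rintro _ ⟨⟨x, -, rfl⟩, hC⟩
    obtain ⟨y, hyC, hyN⟩ := hmeet _ hC
    rw [connectedComponentIn_eq hyC, connectedComponentIn_eq (hN_sub hyN)]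

section CollarBand

variable {X M : Type*} [TopologicalSpace X] [TopologicalSpace M] {c : X × I → M} {ε : ℝ}

def collarBand (c : X × I → M) (ε : ℝ) : Set M :=
  c '' (univ ×ˢ (Subtype.val ⁻¹' Ioo 0 ε))

theorem isPreconnected_collarBand [PreconnectedSpace X] (hc : Continuous c) :
    IsPreconnected (collarBand c ε) := by
  have hheights : IsPreconnected (Subtype.val ⁻¹' Ioo 0 ε : Set I) := by
    rw [← IsInducing.subtypeVal.isPreconnected_image, image_preimage_eq_inter_range,
      Subtype.range_coe]
    exact (ordConnected_Ioo.inter ordConnected_Icc).isPreconnected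
  exact (isPreconnected_univ.prod hheights).image c hc.continuousOn

theorem mem_closure_collarBand (hc : Continuous c) (hε : 0 < ε) (x : X) :
    c (x, 0) ∈ closure (collarBand c ε) := by
  have hδ : 0 < min ε 1 := lt_min hε one_pos
  have h0 : (0 : I) ∈ closure (Subtype.val ⁻¹' Ioo 0 ε : Set I) := by
    rw [IsInducing.subtypeVal.closure_eq_preimage_closure_image, image_preimage_eq_inter_range,
      Subtype.range_coe]
    refine closure_mono (s := Ioo 0 (min ε 1)) (fun t ht => ?_) ?_
    · exact ⟨⟨ht.1, ht.2.trans_le (min_le_left _ _)⟩, ht.1.le, ht.2.le.trans (min_le_right _ _)⟩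
    · rw [closure_Ioo hδ.ne]
      exact left_mem_Icc.2 hδ.le
  refine map_mem_closure hc (t := collarBand c ε) ?_ (mapsTo_image _ _)
  rw [closure_prod_eq]
  exact ⟨subset_closure (mem_univ x), h0⟩

theorem exists_disjoint_collarBand [CompactSpace X] (hc : Continuous c) {K : Set M}
    (hK : IsClosed K) (hK₀ : ∀ x, c (x, 0) ∉ K) : ∃ ε > 0, Disjoint (collarBand c ε) K := by
  have hpos : ∀ p ∈ c ⁻¹' K, (0 : ℝ) < p.2 := by
    rintro ⟨x, t⟩ hp
    refine t.2.1.lt_of_ne fun h => hK₀ x ?_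
    rwa [show (0 : I) = t from Subtype.ext h]
  obtain ⟨ε, hε, hle⟩ := (hK.preimage hc).isCompact.exists_forall_le' (by fun_prop) hpos
  refine ⟨ε, hε, disjoint_left.2 ?_⟩
  rintro _ ⟨p, ⟨-, hp⟩, rfl⟩ hpK
  exact (hle p hpK).not_gt hp.2

theorem union_collarBand_mem_nhds {B : Set M} (hc : IsEmbedding c) (hB : ∀ x, c (x, 0) ∈ B)
    (hε : 0 < ε) {x : X} (hx : range c ∈ 𝓝 (c (x, 0))) :
    B ∪ collarBand c ε ∈ 𝓝 (c (x, 0)) := by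
  have hlow : {p : X × I | (p.2 : ℝ) < ε} ∈ 𝓝 (x, 0) :=
    (isOpen_lt (by fun_prop) continuous_const).mem_nhds hε
  refine Filter.mem_of_superset
    (nhdsWithin_eq_nhds.2 hx ▸ hc.isInducing.image_mem_nhdsWithin hlow) ?_
  rintro _ ⟨⟨y, t⟩, ht, rfl⟩
  rcases t.2.1.eq_or_lt with h | h
  · left
    rw [show t = 0 from Subtype.ext h.symm]
    exact hB y
  · exact Or.inr ⟨(y, t), ⟨trivial, h, ht⟩, rfl⟩

end CollarBand

theorem interior_of_compact_connected_boundary_one_ended_general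
    (M : Type) [TopologicalSpace M] [CompactSpace M] [T2Space M]
    (B : Set M) (hBne : B.Nonempty) (hBcl : IsClosed B) (hBconn : IsConnected B)
    (c : ↥B × ↥(Set.Icc (0 : ℝ) 1) → M)
    (hc : Topology.IsEmbedding c)
    (hc0 : ∀ b : ↥B, c (b, ⟨0, Set.left_mem_Icc.mpr zero_le_one⟩) = b)
    (hcnbhd : ∀ b ∈ B, Set.range c ∈ nhds b)
    (hct : ∀ (b : ↥B) (t : ↥(Set.Icc (0 : ℝ) 1)), 0 < (t : ℝ) → c (b, t) ∉ B) :
    ∀ K : Set ↥Bᶜ, IsCompact K →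
      ∃! C : Set ↥Bᶜ,
        (∃ x ∈ Kᶜ, C = connectedComponentIn Kᶜ x) ∧ ¬ IsCompact (closure C) := by
  intro K hK
  have : CompactSpace B := isCompact_iff_compactSpace.mp hBcl.isCompact
  have : PreconnectedSpace B := Subtype.preconnectedSpace hBconn.isPreconnected
  have hc_zero : ∀ b : B, c (b, 0) = b := hc0
  obtain ⟨ε, hε, hεK⟩ := exists_disjoint_collarBand hc.continuous
    (hK.image continuous_subtype_val).isClosed fun b ⟨x, _, hx⟩ => x.2 (hx ▸ (hc_zero b).symm ▸ b.2)
  have hband : collarBand c ε ⊆ Bᶜ := by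
    rintro _ ⟨p, ⟨-, hp⟩, rfl⟩
    exact hct p.1 p.2 hp.1
  have himage : Subtype.val '' (Subtype.val ⁻¹' collarBand c ε : Set ↥Bᶜ) = collarBand c ε := by
    rw [image_preimage_eq_inter_range, Subtype.range_coe, inter_eq_left.2 hband]
  refine existsUnique_connectedComponentIn_not_isCompact_closure
    (N := Subtype.val ⁻¹' collarBand c ε) ?_ ?_ ?_ fun C hC => ?_
  · exact IsInducing.subtypeVal.isPreconnected_image.1
      (by rw [himage]; exact isPreconnected_collarBand hc.continuous)
  · exact fun x hx hxK => hεK.ne_of_mem hx ⟨x, hxK, rfl⟩ rfl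
  · refine not_isCompact_closure_of_subset_closure_image_val hBne fun b hb => ?_
    simpa only [himage, hc_zero] using mem_closure_collarBand hc.continuous hε ⟨b, hb⟩
  · refine inter_preimage_nonempty_of_not_isCompact_closure (fun b hb => ?_) hC
    simpa only [hc_zero] using union_collarBand_mem_nhds hc (fun b => (hc_zero b).symm ▸ b.2) hε
      (x := ⟨b, hb⟩) (by simpa only [hc_zero] using hcnbhd b hb)

/-- The interior `I = M \ B` of a compact connected Hausdorff space `M` along a nonempty
closed connected collared subset `B` (modelling a compact manifold with connected boundary)
is one-ended: for every compact `K ⊆ I` there is exactly one connected component of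
`I \ K` whose closure in `I` is noncompact. -/
theorem interior_of_compact_connected_boundary_one_ended
    (M : Type) [TopologicalSpace M] [CompactSpace M] [ConnectedSpace M] [T2Space M]
    (B : Set M) (hBne : B.Nonempty) (hBcl : IsClosed B) (hBconn : IsConnected B)
    (c : ↥B × ↥(Set.Icc (0 : ℝ) 1) → M)
    (hc : Topology.IsEmbedding c)
    (hc0 : ∀ b : ↥B, c (b, ⟨0, Set.left_mem_Icc.mpr zero_le_one⟩) = b)
    (hcnbhd : ∀ b ∈ B, Set.range c ∈ nhds b)
    (hct : ∀ (b : ↥B) (t : ↥(Set.Icc (0 : ℝ) 1)), 0 < (t : ℝ) → c (b, t) ∉ B) :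
    ∀ K : Set ↥Bᶜ, IsCompact K →
      ∃! C : Set ↥Bᶜ,
        (∃ x ∈ Kᶜ, C = connectedComponentIn Kᶜ x) ∧ ¬ IsCompact (closure C) :=
  interior_of_compact_connected_boundary_one_ended_general M B hBne hBcl hBconn c hc hc0 hcnbhd hct
end

section
/- Let n ≥ 2 and let f : EuclideanSpace ℝ (Fin n) → ℝ be continuously differentiable (ContDiff ℝ 1 f) such that the level set M := f ⁻¹' {0} is compact and 0 is a regular value, i.e., fderiv ℝ f x ≠ 0 for every x ∈ M. Let σ : ℝ → EuclideanSpace ℝ (Fin n) be a continuously differentiable, injective, proper map (IsProperMap σ) which meets M transversely: for every t with f (σ t) = 0 one has deriv (f ∘ σ) t ≠ 0. Then the set {t : ℝ | f (σ t) = 0} is finite and its cardinality (Set.ncard) is even. -/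
/-!
Transversality makes `g = f ∘ σ` change sign at each of its zeros, so the zeros are isolated; they
form the compact set `σ⁻¹(M)` (σ is proper), hence finitely many. Outside a ball containing `M`,
`f` has constant sign because the exterior of a ball is connected when `n ≥ 2`, and `σ t` lies
there for `|t|` large. So `g` has the same sign at both ends of an interval containing all its
zeros, and a function that changes sign at each zero must then have an even number of them.
-/

open Set Metric Filter Topology

def CrossesZeroAt (g : ℝ → ℝ) (t : ℝ) : Prop :=
  ∃ c : ℝ, (∀ᶠ s in 𝓝[<] t, g s * c < 0) ∧ ∀ᶠ s in 𝓝[>] t, 0 < g s * c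

theorem HasDerivAt.crossesZeroAt {g : ℝ → ℝ} {c t : ℝ} (hg : HasDerivAt g c t) (h0 : g t = 0)
    (hc : c ≠ 0) : CrossesZeroAt g t := by
  have hslope : ∀ᶠ s in 𝓝[≠] t, 0 < slope g t s * c :=
    hasDerivAt_iff_tendsto_slope.1 hg <|
      (isOpen_lt continuous_const (continuous_mul_const c)).mem_nhds (mul_self_pos.2 hc)
  have hmul : ∀ s ≠ t, g s * c = slope g t s * c * (s - t) := fun s hs => by
    rw [slope_def_field, h0, sub_zero]
    field_simp [sub_ne_zero.2 hs]
  refine ⟨c, ?_, ?_⟩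
  · filter_upwards [nhdsWithin_mono t (fun s hs => ne_of_lt hs) hslope, self_mem_nhdsWithin]
      with s hpos (hst : s < t)
    rw [hmul s hst.ne]
    exact mul_neg_of_pos_of_neg hpos (sub_neg.2 hst)
  · filter_upwards [nhdsWithin_mono t (fun s hs => ne_of_gt hs) hslope, self_mem_nhdsWithin]
      with s hpos (hst : t < s)
    rw [hmul s hst.ne']
    exact mul_pos hpos (sub_pos.2 hst)

theorem CrossesZeroAt.eventually_ne {g : ℝ → ℝ} {t : ℝ} (h : CrossesZeroAt g t) :
    ∀ᶠ s in 𝓝[≠] t, g s ≠ 0 := by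
  obtain ⟨c, hlt, hgt⟩ := h
  rw [← nhdsLT_sup_nhdsGT, eventually_sup]
  exact ⟨hlt.mono fun s hs h0 => by simp [h0] at hs, hgt.mono fun s hs h0 => by simp [h0] at hs⟩

theorem CrossesZeroAt.exists_opposite_signs {g : ℝ → ℝ} {t l u : ℝ} (h : CrossesZeroAt g t)
    (hl : l < t) (hu : t < u) :
    ∃ s ∈ Ioo l t, ∃ s' ∈ Ioo t u,
      (∀ x ∈ Ico s t, g x ≠ 0) ∧ g s' ≠ 0 ∧ (0 < g s ↔ ¬ 0 < g s') := by
  obtain ⟨c, hlt, hgt⟩ := h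
  obtain ⟨l', hl't, hleft⟩ := mem_nhdsLT_iff_exists_Ioo_subset.1 hlt
  obtain ⟨u', hu't, hright⟩ := mem_nhdsGT_iff_exists_Ioo_subset.1 hgt
  obtain ⟨s, hls, hst⟩ := exists_between (max_lt hl hl't)
  obtain ⟨s', hts', hsu⟩ := exists_between (lt_min hu hu't)
  have hneg : ∀ x ∈ Ico s t, g x * c < 0 := fun x hx =>
    hleft ⟨(le_max_right l l').trans_lt (hls.trans_le hx.1), hx.2⟩
  have hpos : 0 < g s' * c := hright ⟨hts', hsu.trans_le (min_le_right u u')⟩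
  refine ⟨s, ⟨(le_max_left l l').trans_lt hls, hst⟩, s', ⟨hts', hsu.trans_le (min_le_left u u')⟩,
    fun x hx h0 => by simpa [h0] using hneg x hx, fun h0 => by simp [h0] at hpos, ?_⟩
  have hprod : g s * c * (g s' * c) < 0 := mul_neg_of_neg_of_pos (hneg s ⟨le_rfl, hst⟩) hpos
  constructor
  · intro h1 h2
    nlinarith [mul_nonneg (mul_pos h1 h2).le (sq_nonneg c)]
  · intro h1
    by_contra h2
    nlinarith [mul_nonneg (mul_nonneg_of_nonpos_of_nonpos (not_lt.1 h2) (not_lt.1 h1)) (sq_nonneg c)]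

theorem IsPreconnected.pos_iff_pos {X : Type*} [TopologicalSpace X] {s : Set X}
    (hs : IsPreconnected s) {f : X → ℝ} (hf : ContinuousOn f s) (h0 : ∀ x ∈ s, f x ≠ 0)
    {a b : X} (ha : a ∈ s) (hb : b ∈ s) : 0 < f a ↔ 0 < f b := by
  suffices key : ∀ a ∈ s, ∀ b ∈ s, 0 < f a → 0 < f b from ⟨key a ha b hb, key b hb a ha⟩
  intro a ha b hb hpos
  by_contra hb0
  obtain ⟨x, hx, hx0⟩ := hs.intermediate_value hb ha hf ⟨not_lt.1 hb0, hpos.le⟩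
  exact h0 x hx hx0

theorem finite_zeros_of_crossesZeroAt {g : ℝ → ℝ} (hK : IsCompact {t | g t = 0})
    (hcross : ∀ t, g t = 0 → CrossesZeroAt g t) : {t | g t = 0}.Finite :=
  hK.finite <| isDiscrete_iff_nhdsNE.2 fun t ht =>
    inf_principal_eq_bot.2 (hcross t ht).eventually_ne

theorem isPreconnected_compl_closedBall {E : Type*} [NormedAddCommGroup E] [NormedSpace ℝ E]
    (h : 1 < Module.rank ℝ E) (x : E) {r : ℝ} (hr : 0 ≤ r) : IsPreconnected (closedBall x r)ᶜ := by
  have himage : (fun p : E × ℝ => x + p.2 • p.1) '' (sphere 0 1 ×ˢ Ioi r) = (closedBall x r)ᶜ := by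
    ext y
    simp only [mem_image, mem_prod, mem_sphere_zero_iff_norm, mem_Ioi, mem_compl_iff,
      mem_closedBall, not_le, Prod.exists]
    constructor
    · rintro ⟨v, t, ⟨hv, ht⟩, rfl⟩
      rwa [dist_eq_norm, add_sub_cancel_left, norm_smul, hv, mul_one, Real.norm_eq_abs,
        abs_of_pos (hr.trans_lt ht)]
    · intro hy
      have hne : ‖y - x‖ ≠ 0 := by rw [← dist_eq_norm]; exact (hr.trans_lt hy).ne'
      refine ⟨‖y - x‖⁻¹ • (y - x), ‖y - x‖, ⟨?_, by rwa [← dist_eq_norm]⟩, ?_⟩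
      · rw [norm_smul, norm_inv, norm_norm, inv_mul_cancel₀ hne]
      · rw [smul_smul, mul_inv_cancel₀ hne, one_smul, add_sub_cancel]
  rw [← himage]
  exact ((isConnected_sphere h 0 zero_le_one).isPreconnected.prod isPreconnected_Ioi).image _
    (by fun_prop)

theorem pos_iff_pos_of_forall_mem_Icc_ne_zero {g : ℝ → ℝ} {a b : ℝ} (hab : a ≤ b)
    (hg : ContinuousOn g (Icc a b)) (h0 : ∀ x ∈ Icc a b, g x ≠ 0) : 0 < g a ↔ 0 < g b :=
  isPreconnected_Icc.pos_iff_pos hg h0 (left_mem_Icc.2 hab) (right_mem_Icc.2 hab)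

theorem even_ncard_zeros_iff {g : ℝ → ℝ} {a b : ℝ} (hab : a ≤ b) (hg : ContinuousOn g (Icc a b))
    (hcross : ∀ t ∈ Ioo a b, g t = 0 → CrossesZeroAt g t) (ha : g a ≠ 0) (hb : g b ≠ 0)
    (hfin : {t ∈ Ioo a b | g t = 0}.Finite) :
    Even {t ∈ Ioo a b | g t = 0}.ncard ↔ (0 < g a ↔ 0 < g b) := by
  induction hk : {t ∈ Ioo a b | g t = 0}.ncard generalizing b with
  | zero =>
    have hZ := (ncard_eq_zero hfin).1 hk
    refine iff_of_true .zero <| pos_iff_pos_of_forall_mem_Icc_ne_zero hab hg fun x hx h0 => ?_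
    rcases eq_endpoints_or_mem_Ioo_of_mem_Icc hx with rfl | rfl | hx'
    · exact ha h0
    · exact hb h0
    · exact eq_empty_iff_forall_notMem.1 hZ x ⟨hx', h0⟩
  | succ k ih =>
    set Z := {t ∈ Ioo a b | g t = 0}
    obtain ⟨t₀, ht₀, hmax⟩ := Z.exists_max_image id hfin (nonempty_of_ncard_ne_zero (by omega))
    obtain ⟨s, hs, s', hs', hleft, hs'0, hsign⟩ :=
      (hcross t₀ ht₀.1 ht₀.2).exists_opposite_signs ht₀.1.1 ht₀.1.2
    have hZs : {t ∈ Ioo a s | g t = 0} = Z \ {t₀} := by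
      ext x
      constructor
      · rintro ⟨⟨hax, hxs⟩, h0⟩
        have hxt : x < t₀ := hxs.trans hs.2
        exact ⟨⟨⟨hax, hxt.trans ht₀.1.2⟩, h0⟩, hxt.ne⟩
      · rintro ⟨hxZ, hne⟩
        refine ⟨⟨hxZ.1.1, not_le.1 fun hsx => hleft x ⟨hsx, ?_⟩ hxZ.2⟩, hxZ.2⟩
        exact lt_of_le_of_ne (hmax x hxZ) hne
    have hright : 0 < g s' ↔ 0 < g b := by
      refine pos_iff_pos_of_forall_mem_Icc_ne_zero hs'.2.le
        (hg.mono (Icc_subset_Icc (ht₀.1.1.trans hs'.1).le le_rfl)) fun x hx h0 => ?_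
      have ht₀x : t₀ < x := hs'.1.trans_le hx.1
      rcases hx.2.eq_or_lt with rfl | hxb
      · exact hb h0
      · exact (hmax x ⟨⟨ht₀.1.1.trans ht₀x, hxb⟩, h0⟩).not_gt ht₀x
    have hIH := ih hs.1.le (hg.mono (Icc_subset_Icc le_rfl (hs.2.trans ht₀.1.2).le))
      (fun t ht => hcross t ⟨ht.1, ht.2.trans (hs.2.trans ht₀.1.2)⟩) (hleft s ⟨le_rfl, hs.2⟩)
      (hZs ▸ hfin.sdiff) (by rw [hZs, ncard_sdiff_singleton_of_mem ht₀, hk]; rfl)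
    rw [Nat.even_add_one, hIH, hsign, hright]
    tauto

theorem IsProperMap.exists_abs_lt_of_mem_closedBall {E : Type*} [PseudoMetricSpace E]
    [ProperSpace E] {σ : ℝ → E} (hσ : IsProperMap σ) (x : E) (R : ℝ) :
    ∃ r, 0 < r ∧ ∀ t, σ t ∈ closedBall x R → |t| < r := by
  obtain ⟨r, hr, hsub⟩ :=
    (hσ.isCompact_preimage (isCompact_closedBall x R)).isBounded.subset_ball_lt 0 0
  exact ⟨r, hr, fun t ht => by simpa [Real.dist_0_eq_abs] using hsub ht⟩

theorem proper_line_meets_closed_hypersurface_evenly_general (n : ℕ) (hn : 2 ≤ n)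
    (f : EuclideanSpace ℝ (Fin n) → ℝ) (hf : ContDiff ℝ 1 f)
    (hMc : IsCompact (f ⁻¹' {0}))
    (σ : ℝ → EuclideanSpace ℝ (Fin n)) (hσ : ContDiff ℝ 1 σ)
    (hσprop : IsProperMap σ)
    (htrans : ∀ t : ℝ, f (σ t) = 0 → deriv (f ∘ σ) t ≠ 0) :
    {t : ℝ | f (σ t) = 0}.Finite ∧ Even {t : ℝ | f (σ t) = 0}.ncard := by
  have hg : Differentiable ℝ (f ∘ σ) := (hf.comp hσ).differentiable one_ne_zero
  have hcross (t : ℝ) (ht : f (σ t) = 0) : CrossesZeroAt (f ∘ σ) t :=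
    (hg t).hasDerivAt.crossesZeroAt ht (htrans t ht)
  have hfin : {t : ℝ | f (σ t) = 0}.Finite :=
    finite_zeros_of_crossesZeroAt (g := f ∘ σ) (hσprop.isCompact_preimage hMc) hcross
  obtain ⟨R, hR, hMR⟩ := hMc.isBounded.subset_closedBall_lt 0 0
  obtain ⟨r, hr, hσr⟩ := hσprop.exists_abs_lt_of_mem_closedBall 0 R
  have hout (t : ℝ) (ht : r ≤ |t|) : σ t ∈ (closedBall 0 R)ᶜ := fun hmem => (hσr t hmem).not_ge ht
  have hout_neg : σ (-r) ∈ (closedBall 0 R)ᶜ := hout _ (by rw [abs_neg]; exact le_abs_self r)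
  have hout_pos : σ r ∈ (closedBall 0 R)ᶜ := hout _ (le_abs_self r)
  have hzeros : {t ∈ Ioo (-r) r | f (σ t) = 0} = {t | f (σ t) = 0} :=
    ext fun t => ⟨And.right, fun h0 => ⟨abs_lt.1 (hσr t (hMR h0)), h0⟩⟩
  have hrank : 1 < Module.rank ℝ (EuclideanSpace ℝ (Fin n)) := by
    rw [← Module.finrank_eq_rank, finrank_euclideanSpace_fin]
    exact_mod_cast hn
  have hends : 0 < f (σ (-r)) ↔ 0 < f (σ r) :=
    (isPreconnected_compl_closedBall hrank 0 hR.le).pos_iff_pos hf.continuous.continuousOn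
      (fun x hx h0 => hx (hMR h0)) hout_neg hout_pos
  refine ⟨hfin, hzeros ▸ (even_ncard_zeros_iff (by linarith) hg.continuous.continuousOn
    (fun t _ => hcross t) (fun h0 => hout_neg (hMR h0)) (fun h0 => hout_pos (hMR h0))
    (hzeros ▸ hfin)).2 hends⟩

/-- Proposition 5.4.2: a smooth properly embedded line in `ℝⁿ` meets a compact smooth
regular level hypersurface `M = f⁻¹(0)` transversely in an even (finite) number of
points. -/
theorem proper_line_meets_closed_hypersurface_evenly (n : ℕ) (hn : 2 ≤ n)
    (f : EuclideanSpace ℝ (Fin n) → ℝ) (hf : ContDiff ℝ 1 f)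
    (hMc : IsCompact (f ⁻¹' {0}))
    (hreg : ∀ x ∈ f ⁻¹' {0}, fderiv ℝ f x ≠ 0)
    (σ : ℝ → EuclideanSpace ℝ (Fin n)) (hσ : ContDiff ℝ 1 σ)
    (hσinj : Function.Injective σ) (hσprop : IsProperMap σ)
    (htrans : ∀ t : ℝ, f (σ t) = 0 → deriv (f ∘ σ) t ≠ 0) :
    {t : ℝ | f (σ t) = 0}.Finite ∧ Even {t : ℝ | f (σ t) = 0}.ncard :=
  proper_line_meets_closed_hypersurface_evenly_general n hn f hf hMc σ hσ hσprop htrans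
end

section
/- The presented group G = ⟨β, γ | β⁵ = γ⁷ = (βγ)² = 1⟩ is nontrivial: there exists g : G with g ≠ 1. -/
set_option maxRecDepth 10000

/-- The generator `b` of the free group on two generators. -/
def b : FreeGroup (Fin 2) := FreeGroup.of 0

/-- The generator `c` of the free group on two generators. -/
def c : FreeGroup (Fin 2) := FreeGroup.of 1

/-- The relators `β⁵, γ⁷, (βγ)²` of the (7,5,2)-triangle-type presentation. -/
def rels : Set (FreeGroup (Fin 2)) := {b ^ 5, c ^ 7, (b * c) ^ 2}

def x : Equiv.Perm (Fin 7) := ([0, 1, 2, 3, 4] : List (Fin 7)).formPerm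
def y : Equiv.Perm (Fin 7) := ([0, 4, 3, 2, 5, 1, 6] : List (Fin 7)).formPerm

def f : Fin 2 → Equiv.Perm (Fin 7) := ![x, y]

lemma hrels : ∀ r ∈ rels, FreeGroup.lift f r = 1 := by
  intro r hr
  rcases hr with h | h | h <;> subst h <;>
    simp only [b, c, map_pow, map_mul, FreeGroup.lift_apply_of, f] <;> decide

/-- The presented group `G = ⟨β, γ ∣ β⁵ = γ⁷ = (βγ)² = 1⟩` (the quotient of `π₁(∂Ma⁴)`
of the Mazur manifold by the normal closure of `β⁵`) is nontrivial. -/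
theorem presentedGroup_nontrivial : ∃ g : PresentedGroup rels, g ≠ 1 := by
  refine ⟨PresentedGroup.of 0, fun h => ?_⟩
  have := congrArg (PresentedGroup.toGroup hrels) h
  rw [PresentedGroup.toGroup.of, map_one] at this
  have : f 0 ≠ 1 := by decide
  simp_all
end

section
/- In the presented group G = ⟨β, γ | β⁵ = γ⁷ = (βγ)² = 1⟩, the image of b * c (i.e., the element βγ) has order exactly 2. -/
def pa : Equiv.Perm (Fin 7) :=
  ⟨![1,2,3,4,0,5,6], ![4,0,1,2,3,5,6], by decide, by decide⟩

def pc : Equiv.Perm (Fin 7) :=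
  ⟨![4,0,1,5,6,2,3], ![1,2,5,6,0,3,4], by decide, by decide⟩

def fgen : Fin 2 → Equiv.Perm (Fin 7) := ![pa, pc]

lemma rels_killed : ∀ r ∈ rels, FreeGroup.lift fgen r = 1 := by
  intro r hr
  rcases hr with h | h | h <;> subst h <;>
    simp only [b, c, map_pow, map_mul, FreeGroup.lift_apply_of] <;> decide

noncomputable def φ : PresentedGroup rels →* Equiv.Perm (Fin 7) :=
  PresentedGroup.toGroup rels_killed

/-- In `G = ⟨β, γ ∣ β⁵ = γ⁷ = (βγ)² = 1⟩`, the element `βγ` has order exactly 2. -/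
theorem orderOf_mul_eq_two : orderOf (PresentedGroup.mk rels (b * c)) = 2 := by
  have hsq : (PresentedGroup.mk rels (b * c)) ^ 2 = 1 := by
    rw [← map_pow]
    exact (QuotientGroup.eq_one_iff _).2
      (Subgroup.subset_normalClosure (by right; right; rfl))
  have hne : (PresentedGroup.mk rels (b * c)) ≠ 1 := by
    intro h
    have : φ (PresentedGroup.mk rels (b * c)) = 1 := by rw [h, map_one]
    have h2 : φ (PresentedGroup.mk rels (b * c)) = fgen 0 * fgen 1 := by
      simp [φ, b, c, PresentedGroup.mk]
      rfl
    rw [h2] at this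
    exact absurd this (by decide)
  exact orderOf_eq_prime hsq hne
end

section
/- There exists a group homomorphism h from the presented group G = ⟨β, γ | β⁵ = γ⁷ = (βγ)² = 1⟩ to the isometry group of the hyperbolic upper half-plane (UpperHalfPlane ≃ᵢ UpperHalfPlane) such that h(β) has order 5, h(γ) has order 7, and h(βγ) has order 2; in particular the image of h is nontrivial. -/
/-!
`SL(2, ℝ)` acts on `ℍ` by isometries with kernel `{1, -1}`. Send `β` to `A = rotation (π / 5)`,
the elliptic element fixing `I`, and `γ` to `B = D * rotation (π / 7) * D⁻¹`, where
`D = diag(e^{t/2}, e^{-t/2})` moves `I` to `e^t • I`. Then `A⁵ = B⁷ = -1`, and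
`tr (A * B) = 2 cos(π/5) cos(π/7) - 2 sin(π/5) sin(π/7) cosh t` (the hyperbolic law of
cosines), which vanishes for a suitable `t` because `π/5 + π/7 ≤ π/2`; a trace-free element of
`SL(2, ℝ)` squares to `-1`. So all three relators act trivially. The orders are exact since
5, 7, 2 are prime and `A`, `B`, `A * B` have `|tr| < 2`, hence are not `±1`.
-/

open Real Matrix UpperHalfPlane
open scoped MatrixGroups

namespace IsometryEquiv

variable (G X : Type*) [Group G] [PseudoEMetricSpace X] [MulAction G X] [IsIsometricSMul G X]

def constSMulHom : G →* (X ≃ᵢ X) where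
  toFun := constSMul
  map_one' := ext <| one_smul G
  map_mul' g h := ext <| mul_smul g h

end IsometryEquiv

open IsometryEquiv

namespace Matrix.SpecialLinearGroup

lemma sq_eq_neg_one_of_trace_eq_zero {R : Type*} [CommRing R] {g : SL(2, R)}
    (hg : (g : Matrix (Fin 2) (Fin 2) R).trace = 0) : g ^ 2 = -1 := by
  have hdet := g.det_coe
  rw [det_fin_two] at hdet
  rw [trace_fin_two] at hg
  ext i j
  fin_cases i <;> fin_cases j <;> simp [sq, mul_apply, Fin.sum_univ_two] <;> grind

lemma trace_coe_conj {n R : Type*} [Fintype n] [DecidableEq n] [CommRing R]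
    (h g : SpecialLinearGroup n R) :
    ((h * g * h⁻¹ : SpecialLinearGroup n R) : Matrix n n R).trace = (g : Matrix n n R).trace := by
  rw [coe_mul, coe_mul, trace_mul_cycle, ← coe_mul, inv_mul_cancel, coe_one, one_mul]

noncomputable def rotation (θ : ℝ) : SL(2, ℝ) :=
  ⟨!![cos θ, sin θ; -sin θ, cos θ], by simp [det_fin_two_of, ← sq]⟩

@[simp] lemma coe_rotation (θ : ℝ) :
    (rotation θ : Matrix (Fin 2) (Fin 2) ℝ) = !![cos θ, sin θ; -sin θ, cos θ] := rfl

lemma rotation_zero : rotation 0 = 1 := by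
  ext i j
  fin_cases i <;> fin_cases j <;> simp

lemma rotation_add (θ ψ : ℝ) : rotation (θ + ψ) = rotation θ * rotation ψ := by
  ext i j
  fin_cases i <;> fin_cases j <;> simp [mul_apply, Fin.sum_univ_two, cos_add, sin_add] <;> ring

lemma rotation_pi : rotation π = -1 := by
  ext i j
  fin_cases i <;> fin_cases j <;> simp

lemma rotation_pow (θ : ℝ) (n : ℕ) : rotation θ ^ n = rotation (n * θ) := by
  induction n with
  | zero => simp [rotation_zero]
  | succ n ih => rw [pow_succ, ih, ← rotation_add, Nat.cast_succ, add_one_mul]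

lemma rotation_pi_div_pow {n : ℕ} (hn : n ≠ 0) : rotation (π / n) ^ n = -1 := by
  rw [rotation_pow, mul_div_cancel₀ _ (Nat.cast_ne_zero.mpr hn), rotation_pi]

lemma trace_rotation_sq_lt_four {θ : ℝ} (h0 : 0 < θ) (hπ : θ < π) :
    (rotation θ : Matrix (Fin 2) (Fin 2) ℝ).trace ^ 2 < 4 := by
  have hsin := sin_pos_of_pos_of_lt_pi h0 hπ
  simp only [coe_rotation, trace_fin_two_of]
  nlinarith [sin_sq_add_cos_sq θ]

lemma trace_rotation_mul_conj_rotation (α β t : ℝ) :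
    ((rotation α * (diag2 (exp (t / 2)) (exp_ne_zero _) * rotation β *
      (diag2 (exp (t / 2)) (exp_ne_zero _))⁻¹) : SL(2, ℝ)) : Matrix (Fin 2) (Fin 2) ℝ).trace =
      2 * cos α * cos β - 2 * sin α * sin β * cosh t := by
  have hexp : exp (t / 2) ^ 2 = exp t := by rw [← exp_nat_mul]; ring_nf
  simp [trace_fin_two, diag2_coe', coe_inv, adjugate_fin_two, cosh_eq]
  rw [Real.exp_neg, ← hexp]
  field_simp
  ring

lemma one_le_cot_mul_cot {α β : ℝ} (hα : 0 < α) (hβ : 0 < β) (hαβ : α + β ≤ π / 2) :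
    1 ≤ cos α * cos β / (sin α * sin β) := by
  have hsin : 0 < sin α * sin β :=
    mul_pos (sin_pos_of_pos_of_lt_pi hα (by linarith)) (sin_pos_of_pos_of_lt_pi hβ (by linarith))
  have hcos : 0 ≤ cos (α + β) := cos_nonneg_of_mem_Icc ⟨by linarith, hαβ⟩
  rw [one_le_div hsin]
  linarith [cos_add α β]

lemma exists_trace_rotation_mul_conj_rotation_eq_zero {α β : ℝ} (hα : 0 < α) (hβ : 0 < β)
    (hαβ : α + β ≤ π / 2) :
    ∃ D : SL(2, ℝ),
      ((rotation α * (D * rotation β * D⁻¹) : SL(2, ℝ)) : Matrix (Fin 2) (Fin 2) ℝ).trace = 0 := by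
  have hsinα : sin α ≠ 0 := (sin_pos_of_pos_of_lt_pi hα (by linarith)).ne'
  have hsinβ : sin β ≠ 0 := (sin_pos_of_pos_of_lt_pi hβ (by linarith)).ne'
  refine ⟨_, (trace_rotation_mul_conj_rotation α β
    (arcosh (cos α * cos β / (sin α * sin β)))).trans ?_⟩
  rw [cosh_arcosh (one_le_cot_mul_cot hα hβ hαβ)]
  field_simp
  ring

lemma exists_rotations_of_inv_add_inv_le_half {p q : ℕ} (hp : 2 ≤ p) (hq : 2 ≤ q)
    (hpq : (p : ℝ)⁻¹ + (q : ℝ)⁻¹ ≤ 2⁻¹) :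
    ∃ A B : SL(2, ℝ), A ^ p = -1 ∧ B ^ q = -1 ∧
      ((A * B : SL(2, ℝ)) : Matrix (Fin 2) (Fin 2) ℝ).trace = 0 ∧
      (A : Matrix (Fin 2) (Fin 2) ℝ).trace ^ 2 < 4 ∧
      (B : Matrix (Fin 2) (Fin 2) ℝ).trace ^ 2 < 4 := by
  have hp' : (2 : ℝ) ≤ p := mod_cast hp
  have hq' : (2 : ℝ) ≤ q := mod_cast hq
  have hdiv {n : ℝ} (hn : 2 ≤ n) : 0 < π / n ∧ π / n < π :=
    ⟨by positivity, div_lt_self pi_pos (by linarith)⟩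
  obtain ⟨D, hD⟩ := exists_trace_rotation_mul_conj_rotation_eq_zero (hdiv hp').1 (hdiv hq').1
    (calc π / p + π / q = π * ((p : ℝ)⁻¹ + (q : ℝ)⁻¹) := by ring
      _ ≤ π * 2⁻¹ := by gcongr
      _ = π / 2 := by ring)
  refine ⟨rotation (π / p), D * rotation (π / q) * D⁻¹, rotation_pi_div_pow (by omega), ?_, hD,
    trace_rotation_sq_lt_four (hdiv hp').1 (hdiv hp').2, ?_⟩
  · rw [conj_pow, rotation_pi_div_pow (by omega)]
    simp
  · rw [trace_coe_conj]
    exact trace_rotation_sq_lt_four (hdiv hq').1 (hdiv hq').2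

end Matrix.SpecialLinearGroup

open Matrix.SpecialLinearGroup

namespace UpperHalfPlane

lemma constSMulHom_eq_one_iff {g : SL(2, ℝ)} :
    constSMulHom SL(2, ℝ) ℍ g = 1 ↔ g = 1 ∨ g = -1 := by
  have hact : constSMulHom SL(2, ℝ) ℍ g = 1 ↔ ∀ z : ℍ, mapGL ℝ g • z = z :=
    IsometryEquiv.ext_iff
  rw [hact, forall_smul_eq_self_iff_mem_center,
    GeneralLinearGroup.mem_center_iff_val_mem_range_scalar]
  constructor
  · rintro ⟨r, hr⟩
    have hg : (g : Matrix (Fin 2) (Fin 2) ℝ) = scalar (Fin 2) r := by simpa using hr.symm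
    have hr2 : r ^ 2 = 1 := by simpa [hg] using g.det_coe
    rcases sq_eq_one_iff.mp hr2 with rfl | rfl
    · exact .inl (Subtype.ext (by simpa using hg))
    · exact .inr (Subtype.ext (by simpa [← diagonal_one, ← diagonal_neg] using hg))
  · rintro (rfl | rfl)
    · exact ⟨1, by simp⟩
    · exact ⟨-1, by simp [← diagonal_one, ← diagonal_neg]⟩

lemma constSMulHom_ne_one_of_trace_sq_lt_four {g : SL(2, ℝ)}
    (hg : (g : Matrix (Fin 2) (Fin 2) ℝ).trace ^ 2 < 4) : constSMulHom SL(2, ℝ) ℍ g ≠ 1 := by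
  rw [Ne, constSMulHom_eq_one_iff]
  rintro (rfl | rfl) <;> norm_num [trace_fin_two] at hg

lemma orderOf_constSMulHom_eq_prime {g : SL(2, ℝ)} {p : ℕ} (hp : p.Prime) (hgp : g ^ p = -1)
    (hg : (g : Matrix (Fin 2) (Fin 2) ℝ).trace ^ 2 < 4) :
    orderOf (constSMulHom SL(2, ℝ) ℍ g) = p :=
  have : Fact p.Prime := ⟨hp⟩
  orderOf_eq_prime (by rw [← map_pow, hgp, constSMulHom_eq_one_iff]; exact .inr rfl)
    (constSMulHom_ne_one_of_trace_sq_lt_four hg)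

end UpperHalfPlane

lemma exists_presentedGroup_hom {H : Type*} [Group H] {x y : H} (hx : x ^ 5 = 1)
    (hy : y ^ 7 = 1) (hxy : (x * y) ^ 2 = 1) :
    ∃ h : PresentedGroup rels →* H,
      h (PresentedGroup.mk rels b) = x ∧ h (PresentedGroup.mk rels c) = y := by
  have hrels : ∀ r ∈ rels, FreeGroup.lift ![x, y] r = 1 := by
    rintro r (rfl | rfl | rfl) <;> simp [b, c, hx, hy, hxy]
  exact ⟨PresentedGroup.toGroup hrels, PresentedGroup.toGroup.of hrels,
    PresentedGroup.toGroup.of hrels⟩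

/-- Section 2.1: the presented group `G = ⟨β, γ ∣ β⁵ = γ⁷ = (βγ)² = 1⟩` maps to the
isometry group of the hyperbolic plane by a homomorphism `h` with `h β` of order 5,
`h γ` of order 7 and `h (βγ)` of order 2; in particular the image of `h` is
nontrivial. -/
theorem exists_hom_to_hyperbolic_isometries :
    ∃ h : PresentedGroup rels →* (UpperHalfPlane ≃ᵢ UpperHalfPlane),
      orderOf (h (PresentedGroup.mk rels b)) = 5 ∧
      orderOf (h (PresentedGroup.mk rels c)) = 7 ∧
      orderOf (h (PresentedGroup.mk rels (b * c))) = 2 ∧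
      ∃ g : PresentedGroup rels, h g ≠ 1 := by
  obtain ⟨A, B, hA, hB, hAB, hA_tr, hB_tr⟩ :=
    exists_rotations_of_inv_add_inv_le_half (p := 5) (q := 7) (by norm_num) (by norm_num)
      (by norm_num)
  have hAB_sq : (A * B) ^ 2 = -1 := sq_eq_neg_one_of_trace_eq_zero hAB
  set φ := constSMulHom SL(2, ℝ) ℍ
  have hφ : φ (-1) = 1 := constSMulHom_eq_one_iff.mpr (.inr rfl)
  obtain ⟨h, hb, hc⟩ := exists_presentedGroup_hom (x := φ A) (y := φ B)
    (by rw [← map_pow, hA, hφ]) (by rw [← map_pow, hB, hφ])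
    (by rw [← map_mul, ← map_pow, hAB_sq, hφ])
  refine ⟨h, ?_, ?_, ?_, PresentedGroup.mk rels b, ?_⟩
  · rw [hb, orderOf_constSMulHom_eq_prime (by norm_num) hA hA_tr]
  · rw [hc, orderOf_constSMulHom_eq_prime (by norm_num) hB hB_tr]
  · rw [map_mul, map_mul, hb, hc, ← map_mul,
      orderOf_constSMulHom_eq_prime Nat.prime_two hAB_sq (by rw [hAB]; norm_num)]
  · rw [hb]
    exact constSMulHom_ne_one_of_trace_sq_lt_four hA_tr
end
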